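/- Let n ≥ 2 be an integer, t ∈ ℝ, k ∈ ℤ₀, C₀ > 0, and let v : ℤ₀ → ℂ satisfy (Σ_{m∈ℤ₀}|v_m|²)^{1/2} ≤ C₀. Then the sum Σ_{k₁+⋯+k_n=k, k_j∈ℤ₀} ∏_{j=1}^n |v_{k_j}|/|k_j| converges, and |N^n_k(t)(v)| ≤ Z_{0,2}^{n−1} C₀^n / (2^{n−1}(n−1)!), where Z_{0,2} := (π²/3)^{1/2}. In particular, for each fixed k the series Σ_{n=2}^∞ N^n_k(t)(v) converges absolutely, uniformly in t and uniformly over v in the C₀-ball of ℓ²(ℤ₀). -/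

import Mathlib

noncomputable section

open scoped BigOperators
open Complex

/-- `ℤ₀ = ℤ ∖ {0}`. -/
abbrev Z0 : Type := {k : ℤ // k ≠ 0}

/-- negation on `ℤ₀`. -/
def negZ0 (m : Z0) : Z0 := ⟨-m.1, neg_ne_zero.mpr m.2⟩

/-- summand of the `FL^{s,p}` norm. -/
def FLsummand (s p : ℝ) (v : Z0 → ℂ) (k : Z0) : ℝ :=
  (|(k.1 : ℝ)| ^ s * ‖v k‖) ^ p

/-- the Fourier–Lebesgue norm. -/
def FLnorm (s p : ℝ) (v : Z0 → ℂ) : ℝ :=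
  (∑' k : Z0, FLsummand s p v k) ^ (1 / p)

/-- modulation function. -/
def Phi (n : ℕ) (a : Fin n → ℤ) : ℤ := (∑ j, a j) ^ 2 - ∑ j, (a j) ^ 2

/-- tuples of nonzero frequencies summing to `k`. -/
def Tup (n : ℕ) (k : Z0) : Type := {a : Fin n → Z0 // (∑ j, (a j).1) = k.1}

/-- the multilinear form `N^n_k(t)(v)`. -/
def Ncoef (n : ℕ) (k : Z0) (t : ℝ) (v : Z0 → ℂ) : ℂ :=
  ((-1 : ℂ) ^ n * (k.1 : ℂ) / (2 ^ (n - 1) * (Nat.factorial n : ℂ))) *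
    ∑' a : Tup n k,
      Complex.exp (Complex.I * ((Phi n fun j => (a.1 j).1 : ℤ) : ℂ) * (t : ℂ)) *
        ∏ j, v (a.1 j) / ((a.1 j).1 : ℂ)

/-- the multilinear form `I^n_k(t)(v)`. -/
def Icoef (n : ℕ) (k : Z0) (t : ℝ) (v : Z0 → ℂ) : ℂ :=
  ((-1 : ℂ) ^ n * (k.1 : ℂ) / (2 ^ (n - 1) * (Nat.factorial n : ℂ))) *
    ∑' a : Tup n k,
      Complex.I * ((Phi n fun j => (a.1 j).1 : ℤ) : ℂ) *
        Complex.exp (Complex.I * ((Phi n fun j => (a.1 j).1 : ℤ) : ℂ) * (t : ℂ)) *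
        ∏ j, v (a.1 j) / ((a.1 j).1 : ℂ)

/-- the correction term `R^n_k(t)(v)`. -/
def Rcoef (n : ℕ) (k : Z0) (t : ℝ) (v : Z0 → ℂ) : ℂ :=
  (-(Complex.I / 4)) *
    (∑' m : Z0, Complex.exp (-2 * Complex.I * ((m.1 : ℂ)) ^ 2 * (t : ℂ)) * v m * v (negZ0 m)) *
    Ncoef (n - 1) k t v

/-- pairs of nonzero frequencies summing to `k`. -/
def Pair (k : Z0) : Type := {q : Z0 × Z0 // q.1.1 + q.2.1 = k.1}

/-- right-hand side of the Fourier-side quadratic derivative NLS. -/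
def dnlsRHS (u : Z0 → ℂ) (k : Z0) : ℂ :=
  -Complex.I * (k.1 : ℂ) ^ 2 * u k +
    (Complex.I * (k.1 : ℂ) / 2) * ∑' q : Pair k, u q.1.1 * u q.1.2

/-- `u` solves the Fourier-side quadratic derivative NLS on `S`, with absolutely converging
nonlinearity. -/
def SolvesDNLS (u : ℝ → Z0 → ℂ) (S : Set ℝ) : Prop :=
  ∀ k : Z0, ∀ t ∈ S,
    Summable (fun q : Pair k => ‖u t q.1.1 * u t q.1.2‖) ∧
    HasDerivAt (fun τ => u τ k) (dnlsRHS (u t) k) t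

/-- continuity of `t ↦ (|k|^s u_k(t))_k` as a map into `ℓ^p(ℤ₀)`. -/
def FLcontOn (s p : ℝ) (u : ℝ → Z0 → ℂ) (S : Set ℝ) : Prop :=
  (∀ t ∈ S, Summable (FLsummand s p (u t))) ∧
  ∀ t₀ ∈ S, ∀ ε > 0, ∃ δ > 0, ∀ t ∈ S, |t - t₀| < δ →
    FLnorm s p (fun k => u t k - u t₀ k) < ε

/-- interaction representation `v_k(t) = e^{ik²t} u_k(t)`. -/
def interRep (u : ℝ → Z0 → ℂ) (t : ℝ) (k : Z0) : ℂ :=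
  Complex.exp (Complex.I * (k.1 : ℂ) ^ 2 * (t : ℂ)) * u t k

/-!
Write `w m = ‖v m‖ / |m|`. For a tuple `(k₁, …, kₙ)` with sum `k`, the triangle inequality
`|k| ≤ ∑ |kⱼ|` lets one factor `|kⱼ| w (kⱼ) = ‖v (kⱼ)‖ ≤ C₀` absorb the prefactor `|k|` of
`N^n_k`; the other `n - 1` entries determine the tuple, so the remaining products sum to at
most `(∑ w)^(n-1)`, and `∑ w ≤ Z_{0,2} C₀` by Cauchy–Schwarz and `∑_{m ≠ 0} m⁻² = π²/3`.
The `n` choices of the absorbing entry cancel against `n!`, leaving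
`C₀ (Z_{0,2} C₀ / 2)^(n-1) / (n-1)!`, which is summable in `n`.
-/

open Finset

theorem HasSum.prod_fin_pi {α : Type*} {w : α → ℝ} {s : ℝ} (hw : HasSum w s) (hw0 : 0 ≤ w)
    (n : ℕ) : HasSum (fun b : Fin n → α => ∏ i, w (b i)) (s ^ n) := by
  induction n with
  | zero => simp
  | succ n ih =>
    have hprod0 : 0 ≤ fun b : Fin n → α => ∏ i, w (b i) := fun b => prod_nonneg fun i _ => hw0 _
    have hsummable := hw.summable.mul_of_nonneg ih.summable hw0 hprod0
    rw [pow_succ', ← (Fin.consEquiv fun _ => α).hasSum_iff]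
    simpa [Function.comp_def, Fin.prod_univ_succ] using hw.mul ih hsummable

theorem summable_and_tsum_mul_le_sqrt_mul_sqrt {α : Type*} {f g : α → ℝ} (hf0 : 0 ≤ f)
    (hg0 : 0 ≤ g) (hf : Summable fun a => f a ^ 2) (hg : Summable fun a => g a ^ 2) :
    Summable (fun a => f a * g a) ∧
      ∑' a, f a * g a ≤ √(∑' a, f a ^ 2) * √(∑' a, g a ^ 2) := by
  simpa [Real.rpow_two, Real.sqrt_eq_rpow] using
    Real.summable_and_inner_le_Lp_mul_Lq_tsum_of_nonneg .two_two hf0 hg0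
      (by simpa [Real.rpow_two] using hf) (by simpa [Real.rpow_two] using hg)

theorem hasSum_one_div_int_sq : HasSum (fun m : ℤ => 1 / (m : ℝ) ^ 2) (Real.pi ^ 2 / 3) := by
  have hpos : HasSum (fun n : ℕ => 1 / ((n : ℤ) : ℝ) ^ 2) (Real.pi ^ 2 / 6) := by
    simpa using hasSum_zeta_two
  have hneg : HasSum (fun n : ℕ => 1 / ((-(n + 1 : ℕ) : ℤ) : ℝ) ^ 2) (Real.pi ^ 2 / 6) := by
    simp only [Int.cast_neg, neg_sq, Int.cast_natCast]
    simpa using (hasSum_nat_add_iff' 1).mpr hasSum_zeta_two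
  rw [show Real.pi ^ 2 / 3 = Real.pi ^ 2 / 6 + Real.pi ^ 2 / 6 by ring]
  exact hpos.of_nat_of_neg_add_one hneg

theorem summable_and_tsum_norm_div_abs_le {v : Z0 → ℂ} (hv2 : Summable fun m => ‖v m‖ ^ 2) :
    Summable (fun m : Z0 => ‖v m‖ / |(m.1 : ℝ)|) ∧
      ∑' m : Z0, ‖v m‖ / |(m.1 : ℝ)| ≤ √(Real.pi ^ 2 / 3) * √(∑' m, ‖v m‖ ^ 2) := by
  have hZ0 : HasSum (fun m : Z0 => 1 / (m.1 : ℝ) ^ 2) (Real.pi ^ 2 / 3) :=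
    (hasSum_subtype_iff_of_support_subset (s := {m : ℤ | m ≠ 0})
      fun m hm h0 => hm (by simp [h0])).mpr hasSum_one_div_int_sq
  have hinv_sq : HasSum (fun m : Z0 => |(m.1 : ℝ)|⁻¹ ^ 2) (Real.pi ^ 2 / 3) := by
    simpa [inv_pow] using hZ0
  have hcs := summable_and_tsum_mul_le_sqrt_mul_sqrt (fun m => inv_nonneg.mpr (abs_nonneg _))
    (fun m => norm_nonneg (v m)) hinv_sq.summable hv2
  simp only [inv_mul_eq_div, hinv_sq.tsum_eq] at hcs
  exact hcs

theorem norm_le_sqrt_tsum_norm_sq {α E : Type*} [SeminormedAddGroup E] {v : α → E}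
    (hv2 : Summable fun m => ‖v m‖ ^ 2) (m : α) : ‖v m‖ ≤ √(∑' m, ‖v m‖ ^ 2) := by
  simpa using Real.abs_le_sqrt (hv2.le_tsum m fun _ _ => sq_nonneg _)

namespace Tup

variable {n : ℕ} {k : Z0}

theorem abs_le_sum_abs (a : Tup n k) : |(k.1 : ℝ)| ≤ ∑ j, |((a.1 j).1 : ℝ)| := by
  have hk : (k.1 : ℝ) = ∑ j, ((a.1 j).1 : ℝ) := by exact_mod_cast a.2.symm
  exact hk ▸ abs_sum_le_sum_abs _ _

theorem removeNth_injective (j : Fin (n + 1)) :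
    Function.Injective fun a : Tup (n + 1) k => j.removeNth a.1 := by
  intro a b (hab : j.removeNth a.1 = j.removeNth b.1)
  have hentry (c : Tup (n + 1) k) : (c.1 j).1 + ∑ i, (j.removeNth c.1 i).1 = k.1 :=
    (Fin.sum_univ_succAbove (fun i => (c.1 i).1) j).symm.trans c.2
  have hrest : ∑ i, (j.removeNth a.1 i).1 = ∑ i, (j.removeNth b.1 i).1 := by rw [hab]
  have hj : a.1 j = b.1 j := Subtype.ext (by linarith [hentry a, hentry b])
  apply Subtype.ext
  rw [← Fin.insertNth_self_removeNth j a.1, ← Fin.insertNth_self_removeNth j b.1, hj]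
  exact congrArg _ hab

variable {w : Z0 → ℝ} {S : ℝ}

theorem summable_prod (hw : Summable w) (hw0 : 0 ≤ w) :
    Summable fun a : Tup n k => ∏ i, w (a.1 i) :=
  (hw.hasSum.prod_fin_pi hw0 n).summable.comp_injective Subtype.val_injective

theorem summable_prod_removeNth (hw : Summable w) (hw0 : 0 ≤ w) (j : Fin (n + 1)) :
    Summable fun a : Tup (n + 1) k => ∏ i, w (j.removeNth a.1 i) :=
  (hw.hasSum.prod_fin_pi hw0 n).summable.comp_injective (removeNth_injective j)

theorem tsum_prod_removeNth_le (hw : HasSum w S) (hw0 : 0 ≤ w) (j : Fin (n + 1)) :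
    ∑' a : Tup (n + 1) k, ∏ i, w (j.removeNth a.1 i) ≤ S ^ n :=
  have hpi := hw.prod_fin_pi hw0 n
  (Summable.tsum_le_tsum_of_inj _ (removeNth_injective j)
    (fun b _ => prod_nonneg fun i _ => hw0 (b i)) (fun _ => le_rfl)
    (summable_prod_removeNth hw.summable hw0 j) hpi.summable).trans_eq hpi.tsum_eq

theorem abs_mul_prod_le {B : ℝ} (hB : ∀ m : Z0, |(m.1 : ℝ)| * w m ≤ B) (hw0 : 0 ≤ w)
    (a : Tup (n + 1) k) :
    |(k.1 : ℝ)| * ∏ i, w (a.1 i) ≤ ∑ j : Fin (n + 1), B * ∏ i, w (j.removeNth a.1 i) := by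
  calc |(k.1 : ℝ)| * ∏ i, w (a.1 i)
      ≤ (∑ j, |((a.1 j).1 : ℝ)|) * ∏ i, w (a.1 i) :=
        mul_le_mul_of_nonneg_right (abs_le_sum_abs a) (prod_nonneg fun i _ => hw0 _)
    _ = ∑ j, |((a.1 j).1 : ℝ)| * w (a.1 j) * ∏ i, w (j.removeNth a.1 i) := by
        rw [sum_mul]
        refine sum_congr rfl fun j _ => ?_
        rw [Fin.prod_univ_succAbove _ j, mul_assoc]
        rfl
    _ ≤ ∑ j : Fin (n + 1), B * ∏ i, w (j.removeNth a.1 i) :=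
        sum_le_sum fun j _ => mul_le_mul_of_nonneg_right (hB _) (prod_nonneg fun i _ => hw0 _)

theorem abs_mul_tsum_prod_le {B : ℝ} (hw : HasSum w S) (hw0 : 0 ≤ w)
    (hB : ∀ m : Z0, |(m.1 : ℝ)| * w m ≤ B) :
    |(k.1 : ℝ)| * ∑' a : Tup (n + 1) k, ∏ i, w (a.1 i) ≤ (n + 1) * (B * S ^ n) := by
  have hB0 : 0 ≤ B := (mul_nonneg (abs_nonneg _) (hw0 k)).trans (hB k)
  have hsummable := summable_prod_removeNth (n := n) (k := k) hw.summable hw0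
  calc |(k.1 : ℝ)| * ∑' a : Tup (n + 1) k, ∏ i, w (a.1 i)
      = ∑' a : Tup (n + 1) k, |(k.1 : ℝ)| * ∏ i, w (a.1 i) := tsum_mul_left.symm
    _ ≤ ∑' a : Tup (n + 1) k, ∑ j : Fin (n + 1), B * ∏ i, w (j.removeNth a.1 i) :=
        Summable.tsum_le_tsum (abs_mul_prod_le hB hw0) ((summable_prod hw.summable hw0).mul_left _)
          (summable_sum fun j _ => (hsummable j).mul_left B)
    _ = ∑ j : Fin (n + 1), B * ∑' a : Tup (n + 1) k, ∏ i, w (j.removeNth a.1 i) := by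
        rw [Summable.tsum_finsetSum fun j _ => (hsummable j).mul_left B]
        simp_rw [tsum_mul_left]
    _ ≤ ∑ _j : Fin (n + 1), B * S ^ n :=
        sum_le_sum fun j _ => mul_le_mul_of_nonneg_left (tsum_prod_removeNth_le hw hw0 j) hB0
    _ = (n + 1) * (B * S ^ n) := by simp

end Tup

open Nat in
theorem norm_Ncoef_le {n : ℕ} {k : Z0} (t : ℝ) {v : Z0 → ℂ}
    (hs : Summable fun a : Tup n k => ∏ j, ‖v (a.1 j)‖ / |((a.1 j).1 : ℝ)|) :
    ‖Ncoef n k t v‖ ≤ |(k.1 : ℝ)| / (2 ^ (n - 1) * n !) *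
      ∑' a : Tup n k, ∏ j, ‖v (a.1 j)‖ / |((a.1 j).1 : ℝ)| := by
  have hsummand (a : Tup n k) :
      ‖Complex.exp (Complex.I * ((Phi n fun j => (a.1 j).1 : ℤ) : ℂ) * (t : ℂ)) *
        ∏ j, v (a.1 j) / ((a.1 j).1 : ℂ)‖ = ∏ j, ‖v (a.1 j)‖ / |((a.1 j).1 : ℝ)| := by
    simp [Complex.norm_exp, norm_prod]
  rw [Ncoef, norm_mul]
  gcongr
  · simp
  · exact (norm_tsum_le_tsum_norm (hs.congr fun a => (hsummand a).symm)).trans_eq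
      (tsum_congr hsummand)

theorem summable_prod_norm_div_abs {v : Z0 → ℂ}
    (hw : Summable fun m : Z0 => ‖v m‖ / |(m.1 : ℝ)|) (n : ℕ) (k : Z0) :
    Summable fun a : Tup n k => ∏ j, ‖v (a.1 j)‖ / |((a.1 j).1 : ℝ)| :=
  Tup.summable_prod (w := fun m : Z0 => ‖v m‖ / |(m.1 : ℝ)|) hw fun m => by positivity

open Nat in
theorem norm_Ncoef_succ_le {v : Z0 → ℂ} {B : ℝ}
    (hw : Summable fun m : Z0 => ‖v m‖ / |(m.1 : ℝ)|) (hB : ∀ m, ‖v m‖ ≤ B)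
    (n : ℕ) (k : Z0) (t : ℝ) :
    ‖Ncoef (n + 1) k t v‖ ≤ B * (∑' m : Z0, ‖v m‖ / |(m.1 : ℝ)|) ^ n / (2 ^ n * n !) := by
  have hw0 : 0 ≤ fun m : Z0 => ‖v m‖ / |(m.1 : ℝ)| := fun m => by positivity
  have hB' (m : Z0) : |(m.1 : ℝ)| * (‖v m‖ / |(m.1 : ℝ)|) ≤ B := by
    rw [mul_div_cancel₀ _ (by simpa using m.2)]
    exact hB m
  have htup := Tup.abs_mul_tsum_prod_le (n := n) (k := k) hw.hasSum hw0 hB'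
  beta_reduce at htup
  calc ‖Ncoef (n + 1) k t v‖
      ≤ |(k.1 : ℝ)| / (2 ^ n * (n + 1)!) *
          ∑' a : Tup (n + 1) k, ∏ j, ‖v (a.1 j)‖ / |((a.1 j).1 : ℝ)| := by
        have h := norm_Ncoef_le t (summable_prod_norm_div_abs hw (n + 1) k)
        rwa [Nat.add_sub_cancel] at h
    _ ≤ (n + 1) * (B * (∑' m : Z0, ‖v m‖ / |(m.1 : ℝ)|) ^ n) / (2 ^ n * (n + 1)!) := by
        rw [div_mul_eq_mul_div₀]
        gcongr
    _ = B * (∑' m : Z0, ‖v m‖ / |(m.1 : ℝ)|) ^ n / (2 ^ n * n !) := by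
        rw [factorial_succ, cast_mul]
        field_simp
        push_cast
        ring

theorem Ncoef_bound_general (t : ℝ) (k : Z0) (C₀ : ℝ)
    (v : Z0 → ℂ)
    (hv2 : Summable (fun m : Z0 => ‖v m‖ ^ 2))
    (hv : Real.sqrt (∑' m : Z0, ‖v m‖ ^ 2) ≤ C₀) :
    (∀ n : ℕ, 2 ≤ n →
      Summable (fun a : Tup n k =>
        ∏ j, ‖v (a.1 j)‖ / |((a.1 j).1 : ℝ)|) ∧
      ‖Ncoef n k t v‖ ≤
        Real.sqrt (Real.pi ^ 2 / 3) ^ (n - 1) * C₀ ^ n /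
          (2 ^ (n - 1) * (Nat.factorial (n - 1)))) ∧
    Summable (fun n : ℕ => ‖Ncoef (n + 2) k t v‖) := by
  set Z := √(Real.pi ^ 2 / 3)
  have hC₀ : 0 ≤ C₀ := (Real.sqrt_nonneg _).trans hv
  obtain ⟨hw, hS⟩ := summable_and_tsum_norm_div_abs_le hv2
  have hSZ : ∑' m : Z0, ‖v m‖ / |(m.1 : ℝ)| ≤ Z * C₀ :=
    hS.trans (mul_le_mul_of_nonneg_left hv (Real.sqrt_nonneg _))
  have hvC (m : Z0) : ‖v m‖ ≤ C₀ := (norm_le_sqrt_tsum_norm_sq hv2 m).trans hv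
  have hN (n : ℕ) : ‖Ncoef (n + 1) k t v‖ ≤ C₀ * ((Z * C₀ / 2) ^ n / n.factorial) := by
    refine (norm_Ncoef_succ_le hw hvC n k t).trans ?_
    rw [div_pow, div_div, mul_div_assoc]
    gcongr
  refine ⟨fun n hn => ⟨summable_prod_norm_div_abs hw n k, ?_⟩, ?_⟩
  · obtain ⟨n, rfl⟩ : ∃ m, n = m + 1 := ⟨n - 1, by omega⟩
    refine (hN n).trans_eq ?_
    rw [Nat.add_sub_cancel, div_pow, mul_pow, pow_succ]
    field_simp
  · have hexp := (Real.summable_pow_div_factorial (Z * C₀ / 2)).mul_left C₀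
    exact ((summable_nat_add_iff 1).mpr hexp).of_nonneg_of_le (fun _ => norm_nonneg _)
      fun n => hN (n + 1)

/-- Bound on the multilinear form `N^n_k(t)(v)` for `v` in the `C₀`-ball of `ℓ²(ℤ₀)`:
the defining sum converges absolutely and
`|N^n_k(t)(v)| ≤ Z_{0,2}^{n-1} C₀^n / (2^{n-1}(n-1)!)`, where `Z_{0,2} = (π²/3)^{1/2}`.
In particular the series `Σ_{n≥2} N^n_k(t)(v)` converges absolutely. -/
theorem Ncoef_bound (t : ℝ) (k : Z0) (C₀ : ℝ) (hC₀ : 0 < C₀)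
    (v : Z0 → ℂ)
    (hv2 : Summable (fun m : Z0 => ‖v m‖ ^ 2))
    (hv : Real.sqrt (∑' m : Z0, ‖v m‖ ^ 2) ≤ C₀) :
    (∀ n : ℕ, 2 ≤ n →
      Summable (fun a : Tup n k =>
        ∏ j, ‖v (a.1 j)‖ / |((a.1 j).1 : ℝ)|) ∧
      ‖Ncoef n k t v‖ ≤
        Real.sqrt (Real.pi ^ 2 / 3) ^ (n - 1) * C₀ ^ n /
          (2 ^ (n - 1) * (Nat.factorial (n - 1)))) ∧
    Summable (fun n : ℕ => ‖Ncoef (n + 2) k t v‖) :=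
  Ncoef_bound_general t k C₀ v hv2 hv
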